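/- arXiv:1603.08905 — 6 statements merged into one kernel-verified Lean document; each statement's English description precedes it below -/
import Mathlib

section
/- For the problem with P(z,λ) = i(z−λ) and boundary points a = −1, b = 1, the critical curves Re ∫_λ^{−1} √(i(ζ−λ)) dζ = 0 and Re ∫_λ^{1} √(i(ζ−λ)) dζ = 0 intersect at the point λ = −i/√3. -/
/-!
Both points `c - λ` (for `c = ∓1`, `λ = -i/√3`) have modulus `2/√3` and arguments `5π/6` and
`π/6`. With principal powers, `(2/3) e^{iπ/4} (c - λ)^{3/2}` then has argument
`π/4 + (3/2) arg (c - λ)`, which is `3π/2` resp. `π/2`, so both values are purely imaginary.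
-/

open Complex Real

theorem re_ofReal_mul_exp_mul_cpow (a φ s : ℝ) {z : ℂ} (hz : z ≠ 0) :
    ((a : ℂ) * exp (φ * I) * z ^ (s : ℂ)).re =
      a * (‖z‖ ^ s * Real.cos (φ + s * arg z)) := by
  rw [cpow_def_of_ne_zero hz, mul_assoc, ← Complex.exp_add, re_ofReal_mul, Complex.exp_re,
    Real.rpow_def_of_pos (norm_pos_iff.mpr hz)]
  congr 3 <;> simp [log_re, log_im, mul_comm]

theorem re_ofReal_mul_exp_mul_polar_cpow_eq_zero (a φ s : ℝ) {r θ : ℝ} (hr : 0 < r)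
    (hθ : θ ∈ Set.Ioc (-π) π) (hcos : Real.cos (φ + s * θ) = 0) :
    ((a : ℂ) * exp (φ * I) * ((r : ℂ) * (Real.cos θ + Real.sin θ * I)) ^ (s : ℂ)).re = 0 := by
  have hz : (r : ℂ) * (Real.cos θ + Real.sin θ * I) ≠ 0 := by
    push_cast
    rw [← exp_mul_I]
    exact mul_ne_zero (ofReal_ne_zero.mpr hr.ne') (exp_ne_zero _)
  have harg : arg ((r : ℂ) * (Real.cos θ + Real.sin θ * I)) = θ := by
    exact_mod_cast arg_mul_cos_add_sin_mul_I hr hθ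
  rw [re_ofReal_mul_exp_mul_cpow a φ s hz, harg, hcos, mul_zero, mul_zero]

theorem neg_one_sub_neg_I_div_sqrt_three :
    (-1 : ℂ) - (-I / √3) =
      (2 / √3 : ℝ) * (Real.cos (5 * π / 6) + Real.sin (5 * π / 6) * I) := by
  have hcos : Real.cos (5 * π / 6) = -(√3 / 2) := by
    rw [show 5 * π / 6 = π - π / 6 by ring, Real.cos_pi_sub, Real.cos_pi_div_six]
  have hsin : Real.sin (5 * π / 6) = 1 / 2 := by
    rw [show 5 * π / 6 = π - π / 6 by ring, Real.sin_pi_sub, Real.sin_pi_div_six]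
  have hsqrt : (0 : ℝ) < √3 := by positivity
  rw [hcos, hsin]
  apply Complex.ext <;> simp; field_simp

theorem one_sub_neg_I_div_sqrt_three :
    (1 : ℂ) - (-I / √3) = (2 / √3 : ℝ) * (Real.cos (π / 6) + Real.sin (π / 6) * I) := by
  have hsqrt : (0 : ℝ) < √3 := by positivity
  rw [Real.cos_pi_div_six, Real.sin_pi_div_six]
  apply Complex.ext <;> simp; field_simp

/-- For `P(z,λ) = i(z−λ)` with boundary points `a = −1`, `b = 1`, the
point `λ = −i/√3` lies on both critical curves `Re C(±1, λ) = 0`, where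
`C(c,λ) = ∫_λ^c √(i(ζ−λ)) dζ = (2/3)e^{iπ/4}(c−λ)^{3/2}` (principal powers). -/
theorem stmt2 :
    (((2/3 : ℂ) * Complex.exp (Real.pi / 4 * Complex.I) *
        ((-1 : ℂ) - (-Complex.I / Real.sqrt 3)) ^ ((3 : ℂ)/2)).re = 0) ∧
    (((2/3 : ℂ) * Complex.exp (Real.pi / 4 * Complex.I) *
        ((1 : ℂ) - (-Complex.I / Real.sqrt 3)) ^ ((3 : ℂ)/2)).re = 0) := by
  have hr : (0 : ℝ) < 2 / √3 := by positivity
  have hcast : ((2 / 3 : ℝ) : ℂ) = 2 / 3 ∧ ((π / 4 : ℝ) : ℂ) = π / 4 ∧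
      ((3 / 2 : ℝ) : ℂ) = 3 / 2 := by
    push_cast
    exact ⟨rfl, rfl, rfl⟩
  rw [← hcast.1, ← hcast.2.1, ← hcast.2.2, neg_one_sub_neg_I_div_sqrt_three,
    one_sub_neg_I_div_sqrt_three]
  constructor
  · refine re_ofReal_mul_exp_mul_polar_cpow_eq_zero _ _ _ hr
      ⟨by linarith [pi_pos], by linarith [pi_pos]⟩ ?_
    rw [show π / 4 + 3 / 2 * (5 * π / 6) = π / 2 + π by ring, Real.cos_add_pi,
      Real.cos_pi_div_two, neg_zero]
  · refine re_ofReal_mul_exp_mul_polar_cpow_eq_zero _ _ _ hr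
      ⟨by linarith [pi_pos], by linarith [pi_pos]⟩ ?_
    rw [show π / 4 + 3 / 2 * (π / 6) = π / 2 by ring, Real.cos_pi_div_two]
end

section
/- For λ = −it with t > 1/√3, one has Re[(2/3)e^{iπ/4}(1−λ)^{3/2}] = Re[(2/3)e^{iπ/4}(−1−λ)^{3/2}], i.e., every point of the ray (−i/√3, −i∞) lies on the balanced curve for boundary points ±1. -/
/-! For purely imaginary `λ` the two points are reflections of each other, `-1 - λ = -conj (1 - λ)`.
When `Im z > 0` the principal branch gives `(-conj z)^{3/2} = conj (z^{3/2}) · e^{3πi/2}`, and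
`e^{iπ/4} · e^{3πi/2} = conj e^{iπ/4}`, so the two values of `S` are complex conjugates and have
equal real parts. -/

open Complex Real
open scoped ComplexConjugate

namespace Complex

lemma log_neg_conj_of_im_pos {z : ℂ} (hz : 0 < z.im) :
    log (-conj z) = conj (log z) + π * I := by
  have hconj : (conj z).im < 0 := by simpa using hz
  have harg : z.arg ≠ π := fun h => hz.ne' (arg_eq_pi_iff.mp h).2
  apply Complex.ext <;>
    simp [log_re, log_im, arg_neg_eq_arg_add_pi_of_im_neg hconj, arg_conj, harg]

lemma neg_conj_cpow_ofReal_of_im_pos {z : ℂ} (hz : 0 < z.im) (s : ℝ) :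
    (-conj z) ^ (s : ℂ) = conj (z ^ (s : ℂ)) * exp (π * I * s) := by
  have hz0 : z ≠ 0 := fun h => by simp [h] at hz
  rw [cpow_def_of_ne_zero (by simpa using hz0), cpow_def_of_ne_zero hz0,
    log_neg_conj_of_im_pos hz, ← exp_conj, ← exp_add, map_mul, conj_ofReal]
  ring_nf

lemma exp_pi_div_four_mul_I_mul_exp_three_pi_div_two_mul_I :
    exp (π / 4 * I) * exp (π * I * (3 / 2 : ℝ)) = conj (exp (π / 4 * I)) := by
  rw [← exp_conj, ← exp_add]
  have : (π / 4 * I + π * I * (3 / 2 : ℝ) : ℂ) = conj (π / 4 * I) + 2 * π * I := by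
    simp only [map_mul, map_div₀, conj_ofReal, conj_I, map_ofNat]; push_cast; ring
  rw [this, exp_add, exp_two_pi_mul_I, mul_one]

lemma exp_pi_div_four_mul_I_mul_neg_conj_cpow_three_div_two {z : ℂ} (hz : 0 < z.im) :
    exp (π / 4 * I) * (-conj z) ^ ((3 : ℂ) / 2) = conj (exp (π / 4 * I) * z ^ ((3 : ℂ) / 2)) := by
  have h32 : (3 : ℂ) / 2 = ((3 / 2 : ℝ) : ℂ) := by push_cast; ring
  rw [h32, neg_conj_cpow_ofReal_of_im_pos hz, map_mul,
    ← exp_pi_div_four_mul_I_mul_exp_three_pi_div_two_mul_I]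
  ring

end Complex

/-- For `λ = −it` with `t > 1/√3` one has
`Re[(2/3)e^{iπ/4}(1−λ)^{3/2}] = Re[(2/3)e^{iπ/4}(−1−λ)^{3/2}]`, i.e. every point of the
ray `(−i/√3, −i∞)` lies on the balanced curve for the boundary points `±1`. -/
theorem stmt3 (t : ℝ) (ht : 1 / Real.sqrt 3 < t) :
    ((2/3 : ℂ) * Complex.exp (Real.pi / 4 * Complex.I) *
        ((1 : ℂ) - (-Complex.I * t)) ^ ((3 : ℂ)/2)).re =
    ((2/3 : ℂ) * Complex.exp (Real.pi / 4 * Complex.I) *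
        ((-1 : ℂ) - (-Complex.I * t)) ^ ((3 : ℂ)/2)).re := by
  set z : ℂ := 1 + t * I
  have hz : 0 < z.im := by simpa [z] using (by positivity : 0 < 1 / √3).trans ht
  have hright : (1 : ℂ) - -I * t = z := by ring
  have hleft : (-1 : ℂ) - -I * t = -conj z := by simp [z]; ring
  have hcoeff : conj (2 / 3 : ℂ) = 2 / 3 := conj_eq_iff_im.mpr (by norm_num)
  rw [hright, hleft, mul_assoc, mul_assoc, exp_pi_div_four_mul_I_mul_neg_conj_cpow_three_div_two hz,
    ← conj_re (2 / 3 * _), map_mul, hcoeff]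
end

section
/- For P(z,λ) = i(z² − z/2 − λ) with turning points z₁, z₂, the integral ∫_{z₁}^{z₂} (i(ζ−z₁)(ζ−z₂))^{1/2} dζ has zero real part if and only if Im[e^{iπ/4}(z₂ − z₁)²] = 0, which is equivalent to Im λ + Re λ + 1/16 = 0. -/
/-!
Along the segment `ζ = z₁ + t (z₂ - z₁)` the radicand is `-i t (1 - t) (z₂ - z₁)²`. A continuous
branch cannot change sign on `(0, 1)`, where it does not vanish, so it is `√(t (1 - t)) * s` for one
fixed `s` with `s² = -i (z₂ - z₁)²`, and the integral is `s (z₂ - z₁)` times the positive number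
`∫₀¹ √(t (1 - t)) dt`. Since `(s (z₂ - z₁) e^{iπ/4})² = (z₂ - z₁)⁴`, we get
`e^{iπ/4} (z₂ - z₁)² = ± i s (z₂ - z₁)`, whose imaginary part is `± Re (s (z₂ - z₁))`.
Finally `(z₂ - z₁)² = 4 (1/16 + λ)`.
-/

open Complex Real

section

open Set

theorem IsPreconnected.eqOn_or_eqOn_neg_of_sq_eq_sq {X 𝕜 : Type*} [TopologicalSpace X] [Field 𝕜]
    [TopologicalSpace 𝕜] [IsTopologicalDivisionRing 𝕜] [T1Space 𝕜] {S : Set X}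
    (hS : IsPreconnected S) {f g : X → 𝕜} (hf : ContinuousOn f S) (hg : ContinuousOn g S)
    (hg0 : ∀ x ∈ S, g x ≠ 0) (hsq : ∀ x ∈ S, f x ^ 2 = g x ^ 2) :
    EqOn f g S ∨ EqOn f (-g) S := by
  rcases S.eq_empty_or_nonempty with rfl | ⟨x₀, hx₀⟩
  · simp
  have hmaps : MapsTo (f / g) S {1, -1} := fun x hx => by
    have : (f x / g x) ^ 2 = 1 := by
      rw [div_pow, hsq x hx, div_self (pow_ne_zero 2 (hg0 x hx))]
    simpa using this
  have hconst : ∀ x ∈ S, f x / g x = f x₀ / g x₀ := fun x hx =>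
    hS.constant_of_mapsTo (toFinite _).isDiscrete (hf.div hg hg0) hmaps hx hx₀
  rcases hmaps hx₀ with h | h
  · exact .inl fun x hx => (div_eq_one_iff_eq (hg0 x hx)).mp ((hconst x hx).trans h)
  · exact .inr fun x hx => by simpa using (div_eq_iff (hg0 x hx)).mp ((hconst x hx).trans h)

theorem exists_sq_eq_and_eqOn_sqrt_mul_one_sub_mul {f : ℝ → ℂ} {c : ℂ}
    (hf : ContinuousOn f (Ioo 0 1))
    (hsq : ∀ t ∈ Icc (0 : ℝ) 1, f t ^ 2 = (t * (1 - t) : ℝ) * c) :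
    ∃ s : ℂ, s ^ 2 = c ∧ ∀ t ∈ Icc (0 : ℝ) 1, f t = √(t * (1 - t)) * s := by
  have hsqrt_sq : ∀ t ∈ Icc (0 : ℝ) 1, ((√(t * (1 - t)) : ℝ) : ℂ) ^ 2 = (t * (1 - t) : ℝ) :=
    fun t ht => by rw [← ofReal_pow, sq_sqrt (mul_nonneg ht.1 (sub_nonneg.2 ht.2))]
  obtain ⟨s, hs, hfs⟩ :
      ∃ s : ℂ, s ^ 2 = c ∧ EqOn f (fun t => √(t * (1 - t)) * s) (Ioo 0 1) := by
    rcases eq_or_ne c 0 with rfl | hc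
    · exact ⟨0, by simp, fun t ht => by simpa using hsq t (Ioo_subset_Icc_self ht)⟩
    have hr : (c ^ (1 / 2 : ℂ)) ^ 2 = c := by rw [one_div]; exact cpow_ofNat_inv_pow c 2
    have hr0 : c ^ (1 / 2 : ℂ) ≠ 0 := fun h => hc (by rw [← hr, h]; simp)
    have hcont : ContinuousOn (fun t : ℝ => (√(t * (1 - t)) : ℂ) * c ^ (1 / 2 : ℂ)) (Ioo 0 1) := by
      fun_prop
    rcases isPreconnected_Ioo.eqOn_or_eqOn_neg_of_sq_eq_sq hf hcont
      (fun t ht => mul_ne_zero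
        (ofReal_ne_zero.2 (sqrt_pos.2 (mul_pos ht.1 (sub_pos.2 ht.2))).ne') hr0)
      (fun t ht => by
        rw [hsq t (Ioo_subset_Icc_self ht), mul_pow, hsqrt_sq t (Ioo_subset_Icc_self ht), hr])
      with h | h
    · exact ⟨_, hr, h⟩
    · exact ⟨-c ^ (1 / 2 : ℂ), by rw [neg_sq, hr], fun t ht => by simpa using h ht⟩
  refine ⟨s, hs, fun t ht => ?_⟩
  by_cases ht' : t ∈ Ioo 0 1
  · exact hfs ht'
  have hzero : t * (1 - t) = 0 := by
    rcases ht.1.eq_or_lt with rfl | h0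
    · simp
    rcases ht.2.eq_or_lt with rfl | h1
    · simp
    exact absurd ⟨h0, h1⟩ ht'
  simpa [hzero] using hsq t ht

theorem integral_sqrt_mul_one_sub_pos : 0 < ∫ t in (0 : ℝ)..1, √(t * (1 - t)) :=
  intervalIntegral.intervalIntegral_pos_of_pos_on
    (Continuous.intervalIntegrable (by fun_prop) _ _)
    (fun t ht => sqrt_pos.2 (mul_pos ht.1 (sub_pos.2 ht.2))) one_pos

theorem re_integral_mul_eq_zero_iff {f : ℝ → ℂ} {s : ℂ}
    (hf : ∀ t ∈ Icc (0 : ℝ) 1, f t = √(t * (1 - t)) * s) (w : ℂ) :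
    (∫ t in (0 : ℝ)..1, f t * w).re = 0 ↔ (s * w).re = 0 := by
  have hint : ∫ t in (0 : ℝ)..1, f t * w = s * w * ↑(∫ t in (0 : ℝ)..1, √(t * (1 - t))) := by
    rw [← intervalIntegral.integral_ofReal, ← intervalIntegral.integral_const_mul]
    refine intervalIntegral.integral_congr fun t ht => ?_
    rw [uIcc_of_le zero_le_one] at ht
    simp only [hf t ht]
    ring
  rw [hint, re_mul_ofReal, mul_eq_zero, or_iff_left integral_sqrt_mul_one_sub_pos.ne']

end

theorem exp_pi_div_four_mul_I_sq : exp (π / 4 * I) ^ 2 = I := by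
  rw [← Complex.exp_nat_mul]
  convert exp_pi_div_two_mul_I using 2
  push_cast
  ring

theorem im_exp_pi_div_four_mul_I_mul (z : ℂ) :
    (exp (π / 4 * I) * z).im = √2 / 2 * (z.re + z.im) := by
  have h : (π : ℂ) / 4 * I = ((π / 4 : ℝ) : ℂ) * I := by push_cast; ring
  rw [mul_im, h, exp_ofReal_mul_I_re, exp_ofReal_mul_I_im, cos_pi_div_four, sin_pi_div_four]
  ring

theorem re_eq_zero_iff_im_exp_pi_div_four_mul_I_mul_eq_zero {u v : ℂ}
    (h : u ^ 2 = -I * v ^ 2) : u.re = 0 ↔ (exp (π / 4 * I) * v).im = 0 := by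
  set e := exp (π / 4 * I)
  have he : e ^ 2 = I := exp_pi_div_four_mul_I_sq
  have huv : (u * e) ^ 2 = v ^ 2 := by
    rw [mul_pow, h, he]
    linear_combination (-v ^ 2) * I_sq
  have hev : e * v = u * I ∨ e * v = -(u * I) := by
    rcases sq_eq_sq_iff_eq_or_eq_neg.mp huv with h | h
    · exact .inl (by linear_combination (-e) * h + u * he)
    · exact .inr (by linear_combination e * h - u * he)
  rcases hev with h | h <;> simp [h]

/-- For `P(z,λ) = i(z² − z/2 − λ)` with turning points
`z₁, z₂ = 1/4 ∓ √(1/16+λ)`, and any continuous branch `g` of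
`√(i(ζ−z₁)(ζ−z₂))` along the straight segment from `z₁` to `z₂`, the integral
`∫_{z₁}^{z₂} g` has zero real part iff `Im[e^{iπ/4}(z₂−z₁)²] = 0`, which is
equivalent to `Im λ + Re λ + 1/16 = 0`. -/
theorem stmt5 (lam : ℂ)
    (z₁ z₂ : ℂ)
    (hz₁ : z₁ = (1/4 : ℂ) - ((1/16 : ℂ) + lam) ^ ((1 : ℂ)/2))
    (hz₂ : z₂ = (1/4 : ℂ) + ((1/16 : ℂ) + lam) ^ ((1 : ℂ)/2))
    (g : ℝ → ℂ) (hg : ContinuousOn g (Set.Icc 0 1))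
    (hbranch : ∀ t ∈ Set.Icc (0:ℝ) 1,
      (g t) ^ 2 = Complex.I * ((z₁ + (t:ℂ) * (z₂ - z₁)) - z₁) *
        ((z₁ + (t:ℂ) * (z₂ - z₁)) - z₂)) :
    ((∫ t in (0:ℝ)..1, g t * (z₂ - z₁)).re = 0 ↔
      (Complex.exp (Real.pi / 4 * Complex.I) * (z₂ - z₁) ^ 2).im = 0) ∧
    ((Complex.exp (Real.pi / 4 * Complex.I) * (z₂ - z₁) ^ 2).im = 0 ↔
      lam.im + lam.re + 1/16 = 0) := by
  have hw2 : (z₂ - z₁) ^ 2 = 4 * (1 / 16 + lam) := by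
    rw [hz₁, hz₂, one_div (2 : ℂ)]
    linear_combination 4 * cpow_ofNat_inv_pow (1 / 16 + lam) 2
  obtain ⟨s, hs, hgs⟩ := exists_sq_eq_and_eqOn_sqrt_mul_one_sub_mul (c := -I * (z₂ - z₁) ^ 2)
    (hg.mono Set.Ioo_subset_Icc_self) fun t ht => by rw [hbranch t ht]; push_cast; ring
  constructor
  · rw [re_integral_mul_eq_zero_iff hgs]
    exact re_eq_zero_iff_im_exp_pi_div_four_mul_I_mul_eq_zero (by rw [mul_pow, hs]; ring)
  · have him : (exp (π / 4 * I) * (z₂ - z₁) ^ 2).im = 2 * √2 * (lam.im + lam.re + 1 / 16) := by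
      rw [im_exp_pi_div_four_mul_I_mul, hw2]
      simp only [one_div, mul_re, re_ofNat, add_re, inv_re, normSq_ofNat, div_self_mul_self',
        im_ofNat, add_im, inv_im, neg_zero, zero_div, zero_add, zero_mul, sub_zero, mul_im,
        add_zero]
      ring
    rw [him, mul_eq_zero, or_iff_right (by positivity)]
end

section
/- If λ is an eigenvalue of the problem −y'' + k²i(z² − z/2 − λ)y = 0 on [−1,1] with y(−1) = y(1) = 0 and y ≢ 0, then Im λ = −(1/k²)·⟨y',y'⟩/⟨y,y⟩ < 0. -/
/-! Multiplying the equation by `conj y` and integrating by parts with `y(±1) = 0` gives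
`∫ conj y * y'' = -∫ ‖y'‖²`, while the equation itself turns the left side into
`i k² ∫ (x² - x/2 - λ) ‖y‖²`, whose real part is `k² (Im λ) ∫ ‖y‖²`. Both integrals are
positive: `y` is continuous and not identically zero, and `y'` cannot vanish identically
since `y(-1) = 0`. -/

open Complex Real intervalIntegral
open Set MeasureTheory ComplexConjugate

theorem integral_norm_sq_pos {E : Type*} [NormedAddCommGroup E] {f : ℝ → E} {a b : ℝ}
    (hab : a < b) (hf : ContinuousOn f (Icc a b)) (hne : ∃ x ∈ Icc a b, f x ≠ 0) :
    0 < ∫ x in a..b, ‖f x‖ ^ 2 := by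
  obtain ⟨x, hx, hfx⟩ := hne
  exact integral_pos hab (hf.norm.pow 2) (fun _ _ ↦ sq_nonneg _)
    ⟨x, hx, pow_pos (norm_pos_iff.mpr hfx) 2⟩

theorem exists_mem_Icc_hasDerivAt_ne_zero {E : Type*} [NormedAddCommGroup E]
    [NormedSpace ℝ E] {f f' : ℝ → E} {a b x : ℝ} (hf : ∀ t ∈ Icc a b, HasDerivAt f (f' t) t)
    (hx : x ∈ Icc a b) (hne : f x ≠ f a) : ∃ c ∈ Icc a b, f' c ≠ 0 := by
  by_contra! hzero
  refine hne (constant_of_has_deriv_right_zero (HasDerivAt.continuousOn hf)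
    (fun t ht ↦ ?_) x hx)
  have ht' := Ico_subset_Icc_self ht
  simpa [hzero t ht'] using (hf t ht').hasDerivWithinAt

section Dirichlet

variable {a b : ℝ} {y y' y'' : ℝ → ℂ}

theorem integral_conj_mul_deriv_deriv_eq_neg (hy' : ∀ x ∈ uIcc a b, HasDerivAt y (y' x) x)
    (hy'' : ∀ x ∈ uIcc a b, HasDerivAt y' (y'' x) x) (hint : IntervalIntegrable y'' volume a b)
    (ha : y a = 0) (hb : y b = 0) :
    ∫ x in a..b, conj (y x) * y'' x = -((∫ x in a..b, ‖y' x‖ ^ 2 : ℝ) : ℂ) := by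
  have hconj' : IntervalIntegrable (fun x ↦ conj (y' x)) volume a b :=
    (continuous_conj.comp_continuousOn (HasDerivAt.continuousOn hy'')).intervalIntegrable
  have hibp := integral_mul_deriv_eq_deriv_mul (fun x hx ↦ (hy' x hx).star) hy'' hconj' hint
  simp only [ha, hb, star_zero, zero_mul, sub_self, zero_sub] at hibp
  refine hibp.trans ?_
  rw [← integral_ofReal]
  congr 1
  exact integral_congr fun x _ ↦ by simp [mul_comm, mul_conj']

theorem im_mul_integral_norm_sq_eq_neg {q : ℝ → ℝ} {μ : ℂ}
    (hy' : ∀ x ∈ uIcc a b, HasDerivAt y (y' x) x)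
    (hy'' : ∀ x ∈ uIcc a b, HasDerivAt y' (y'' x) x) (hq : ContinuousOn q (uIcc a b))
    (heq : ∀ x ∈ uIcc a b, y'' x = I * (q x - μ) * y x) (ha : y a = 0) (hb : y b = 0) :
    μ.im * ∫ x in a..b, ‖y x‖ ^ 2 = -∫ x in a..b, ‖y' x‖ ^ 2 := by
  have hy : ContinuousOn y (uIcc a b) := HasDerivAt.continuousOn hy'
  have hcoef : ContinuousOn (fun x ↦ I * ((q x : ℂ) - μ)) (uIcc a b) := by fun_prop
  have hint : IntervalIntegrable y'' volume a b :=
    ((hcoef.mul hy).congr heq).intervalIntegrable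
  have hint' : IntervalIntegrable (fun x ↦ I * ((q x : ℂ) - μ) * ((‖y x‖ ^ 2 : ℝ) : ℂ))
      volume a b :=
    (hcoef.mul (continuous_ofReal.comp_continuousOn (hy.norm.pow 2))).intervalIntegrable
  have hibp := integral_conj_mul_deriv_deriv_eq_neg hy' hy'' hint ha hb
  rw [integral_congr (g := fun x ↦ I * ((q x : ℂ) - μ) * ((‖y x‖ ^ 2 : ℝ) : ℂ))
    fun x hx ↦ by simp only [heq x hx, ← mul_conj', ofReal_pow]; ring] at hibp
  have hre := congrArg re hibp
  rw [← RCLike.re_to_complex, ← intervalIntegral_re hint',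
    integral_congr (g := fun x ↦ μ.im * ‖y x‖ ^ 2) fun x _ ↦ by
      simp only [RCLike.re_to_complex, re_mul_ofReal, I_mul_re, sub_im, ofReal_im]; ring,
    intervalIntegral.integral_const_mul] at hre
  simpa using hre

end Dirichlet

theorem stmt7_general (k : ℝ) (hk : 0 < k) (lam : ℂ)
    (y y' y'' : ℝ → ℂ)
    (hy' : ∀ x ∈ Set.Icc (-1:ℝ) 1, HasDerivAt y (y' x) x)
    (hy'' : ∀ x ∈ Set.Icc (-1:ℝ) 1, HasDerivAt y' (y'' x) x)
    (heq : ∀ x ∈ Set.Icc (-1:ℝ) 1,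
      -y'' x + (k:ℂ)^2 * Complex.I * ((x:ℂ)^2 - (x:ℂ)/2 - lam) * y x = 0)
    (hbc : y (-1) = 0 ∧ y 1 = 0)
    (hnt : ∃ x ∈ Set.Icc (-1:ℝ) 1, y x ≠ 0) :
    lam.im = -(1/k^2) * (∫ x in (-1:ℝ)..1, ‖y' x‖^2) / (∫ x in (-1:ℝ)..1, ‖y x‖^2) ∧
      lam.im < 0 := by
  obtain ⟨hleft, hright⟩ := hbc
  obtain ⟨x₀, hx₀, hyx₀⟩ := hnt
  obtain ⟨c, hc, hy'c⟩ := exists_mem_Icc_hasDerivAt_ne_zero hy' hx₀ (hleft ▸ hyx₀)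
  have hA := integral_norm_sq_pos (by norm_num) (HasDerivAt.continuousOn hy')
    ⟨x₀, hx₀, hyx₀⟩
  have hB := integral_norm_sq_pos (by norm_num) (HasDerivAt.continuousOn hy'') ⟨c, hc, hy'c⟩
  have hIcc : uIcc (-1 : ℝ) 1 = Icc (-1) 1 := uIcc_of_le (by norm_num)
  rw [← hIcc] at hy' hy'' heq
  have hode : ∀ x ∈ uIcc (-1 : ℝ) 1,
      y'' x = I * (((k ^ 2 * (x ^ 2 - x / 2) : ℝ) : ℂ) - ((k ^ 2 : ℝ) : ℂ) * lam) * y x := by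
    intro x hx
    push_cast
    linear_combination -heq x hx
  have henergy := im_mul_integral_norm_sq_eq_neg hy' hy'' (by fun_prop) hode hleft hright
  rw [im_ofReal_mul] at henergy
  have him : lam.im =
      -(1 / k ^ 2) * (∫ x in (-1:ℝ)..1, ‖y' x‖ ^ 2) / ∫ x in (-1:ℝ)..1, ‖y x‖ ^ 2 := by
    field_simp
    linear_combination henergy
  refine ⟨him, ?_⟩
  rw [him, neg_mul, neg_div, neg_lt_zero]
  positivity

/-- If `λ` is an eigenvalue of `−y'' + k²i(x² − x/2 − λ)y = 0` on `[−1,1]`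
with `y(±1) = 0` and `y ≢ 0`, then `Im λ = −(1/k²)⟨y',y'⟩/⟨y,y⟩ < 0`. -/
theorem stmt7 (k : ℝ) (hk : 0 < k) (lam : ℂ)
    (y y' y'' : ℝ → ℂ)
    (hy' : ∀ x ∈ Set.Icc (-1:ℝ) 1, HasDerivAt y (y' x) x)
    (hy'' : ∀ x ∈ Set.Icc (-1:ℝ) 1, HasDerivAt y' (y'' x) x)
    (hcont : ContinuousOn y'' (Set.Icc (-1:ℝ) 1))
    (heq : ∀ x ∈ Set.Icc (-1:ℝ) 1,
      -y'' x + (k:ℂ)^2 * Complex.I * ((x:ℂ)^2 - (x:ℂ)/2 - lam) * y x = 0)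
    (hbc : y (-1) = 0 ∧ y 1 = 0)
    (hnt : ∃ x ∈ Set.Icc (-1:ℝ) 1, y x ≠ 0) :
    lam.im = -(1/k^2) * (∫ x in (-1:ℝ)..1, ‖y' x‖^2) / (∫ x in (-1:ℝ)..1, ‖y x‖^2) ∧
      lam.im < 0 :=
  stmt7_general k hk lam y y' y'' hy' hy'' heq hbc hnt
end

section
/- If λ is an eigenvalue of the Couette model problem −y'' + k²i(z − λ)y = 0 on [−1,1] with Dirichlet boundary conditions, then Im λ < 0 and −1 ≤ Re λ ≤ 1. -/
/-!
Write `A = ∫ |y'|²`, `B = ∫ |y|²`, `C = ∫ x |y|²` over `[-1, 1]`. Multiplying the equation by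
`ȳ` and integrating by parts (the boundary terms vanish) gives `A + k² i (C - λ B) = 0`.
The real part reads `A + k² (Im λ) B = 0` and the imaginary part `C = (Re λ) B`. Since `y ≢ 0`
vanishes at `-1`, both `A` and `B` are positive, so `Im λ < 0`; and `|C| ≤ B` gives
`|Re λ| ≤ 1`.
-/

open Complex Set MeasureTheory intervalIntegral ComplexConjugate

lemma eqOn_zero_of_intervalIntegral_eq_zero {f : ℝ → ℝ} {a b : ℝ} (hab : a < b)
    (hf : ContinuousOn f (Icc a b)) (hnn : ∀ x ∈ Icc a b, 0 ≤ f x)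
    (hint : ∫ x in a..b, f x = 0) : EqOn f 0 (Icc a b) := by
  have hIoo : EqOn f 0 (Ioo a b) := by
    intro x hx
    by_contra hfx
    have hopen : IsOpen (Ioo a b ∩ f ⁻¹' {0}ᶜ) :=
      (hf.mono Ioo_subset_Icc_self).isOpen_inter_preimage isOpen_Ioo isOpen_compl_singleton
    have hpos : 0 < volume (Function.support f ∩ Ioc a b) :=
      (hopen.measure_pos volume ⟨x, hx, hfx⟩).trans_le
        (measure_mono fun t ht => ⟨ht.2, Ioo_subset_Ioc_self ht.1⟩)
    have hnn_ae : 0 ≤ᵐ[volume.restrict (uIoc a b)] f := by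
      rw [uIoc_of_le hab.le]
      exact (ae_restrict_iff' measurableSet_Ioc).2
        (.of_forall fun t ht => hnn t (Ioc_subset_Icc_self ht))
    exact ((integral_pos_iff_support_of_nonneg_ae' hnn_ae
      (hf.intervalIntegrable_of_Icc hab.le)).2 ⟨hab, hpos⟩).ne' hint
  exact hIoo.of_subset_closure hf continuousOn_const Ioo_subset_Icc_self
    (closure_Ioo hab.ne).superset

lemma abs_integral_id_mul_le_integral {g : ℝ → ℝ} (hg : ContinuousOn g (Icc (-1) 1))
    (hnn : ∀ x ∈ Icc (-1 : ℝ) 1, 0 ≤ g x) :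
    |∫ x in (-1 : ℝ)..1, x * g x| ≤ ∫ x in (-1 : ℝ)..1, g x := by
  have h11 : (-1 : ℝ) ≤ 1 := by norm_num
  refine (abs_integral_le_integral_abs h11).trans
    (integral_mono_on h11 ?_ (hg.intervalIntegrable_of_Icc h11) fun x hx => ?_)
  · exact ((continuousOn_id.mul hg).abs).intervalIntegrable_of_Icc h11
  · rw [abs_mul, abs_of_nonneg (hnn x hx)]
    exact mul_le_of_le_one_left (hnn x hx) (abs_le.2 hx)

lemma integral_conj_mul_deriv2_of_boundary_zero {a b : ℝ} {y y' y'' : ℝ → ℂ} (hab : a ≤ b)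
    (hy' : ∀ x ∈ Icc a b, HasDerivAt y (y' x) x)
    (hy'' : ∀ x ∈ Icc a b, HasDerivAt y' (y'' x) x)
    (hcont : ContinuousOn y'' (Icc a b)) (ha : y a = 0) (hb : y b = 0) :
    ∫ x in a..b, conj (y x) * y'' x = -((∫ x in a..b, normSq (y' x) : ℝ) : ℂ) := by
  rw [← uIcc_of_le hab] at hy' hy'' hcont
  have hy'c : ContinuousOn y' (uIcc a b) :=
    fun x hx => (hy'' x hx).continuousAt.continuousWithinAt
  rw [integral_mul_deriv_eq_deriv_mul (u := fun x => conj (y x)) (fun x hx => (hy' x hx).star)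
    hy'' hy'c.star.intervalIntegrable hcont.intervalIntegrable, ha, hb,
    ← intervalIntegral.integral_ofReal]
  simp [normSq_eq_conj_mul_self]

lemma couette_energy_identity (k : ℝ) (lam : ℂ) {y y' y'' : ℝ → ℂ}
    (hy' : ∀ x ∈ Icc (-1 : ℝ) 1, HasDerivAt y (y' x) x)
    (hy'' : ∀ x ∈ Icc (-1 : ℝ) 1, HasDerivAt y' (y'' x) x)
    (hcont : ContinuousOn y'' (Icc (-1 : ℝ) 1))
    (heq : ∀ x ∈ Icc (-1 : ℝ) 1, -y'' x + (k : ℂ) ^ 2 * I * ((x : ℂ) - lam) * y x = 0)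
    (hbm : y (-1) = 0) (hbp : y 1 = 0) :
    ((∫ x in (-1 : ℝ)..1, normSq (y' x) : ℝ) : ℂ) + (k : ℂ) ^ 2 * I *
      ((∫ x in (-1 : ℝ)..1, x * normSq (y x) : ℝ) - lam * (∫ x in (-1 : ℝ)..1, normSq (y x) : ℝ))
      = 0 := by
  have h11 : (-1 : ℝ) ≤ 1 := by norm_num
  have hFc : ContinuousOn (fun x => normSq (y x)) (Icc (-1) 1) :=
    continuous_normSq.comp_continuousOn fun x hx => (hy' x hx).continuousAt.continuousWithinAt
  have hsubst : EqOn (fun x => conj (y x) * y'' x)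
      (fun x => (k : ℂ) ^ 2 * I * (((x * normSq (y x) : ℝ) : ℂ) - lam * (normSq (y x) : ℂ)))
      (uIcc (-1) 1) := by
    intro x hx
    rw [uIcc_of_le h11] at hx
    have hy''x : y'' x = (k : ℂ) ^ 2 * I * ((x : ℂ) - lam) * y x := by
      linear_combination -heq x hx
    simp only [hy''x, ofReal_mul, normSq_eq_conj_mul_self]
    ring
  have h := integral_conj_mul_deriv2_of_boundary_zero h11 hy' hy'' hcont hbm hbp
  rw [integral_congr hsubst, intervalIntegral.integral_const_mul, intervalIntegral.integral_sub,
    intervalIntegral.integral_const_mul,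
    intervalIntegral.integral_ofReal, intervalIntegral.integral_ofReal] at h
  · linear_combination h
  · exact (continuous_ofReal.comp_continuousOn (continuousOn_id.mul hFc)).intervalIntegrable_of_Icc
      h11
  · exact ((continuous_ofReal.comp_continuousOn hFc).intervalIntegrable_of_Icc h11).const_mul lam

/-- If `λ` is an eigenvalue of the Couette model problem
`−y'' + k²i(x − λ)y = 0` on `[−1,1]` with Dirichlet boundary conditions, then
`Im λ < 0` and `−1 ≤ Re λ ≤ 1`. -/
theorem stmt9 (k : ℝ) (hk : 0 < k) (lam : ℂ)
    (y y' y'' : ℝ → ℂ)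
    (hy' : ∀ x ∈ Set.Icc (-1:ℝ) 1, HasDerivAt y (y' x) x)
    (hy'' : ∀ x ∈ Set.Icc (-1:ℝ) 1, HasDerivAt y' (y'' x) x)
    (hcont : ContinuousOn y'' (Set.Icc (-1:ℝ) 1))
    (heq : ∀ x ∈ Set.Icc (-1:ℝ) 1,
      -y'' x + (k:ℂ)^2 * Complex.I * ((x:ℂ) - lam) * y x = 0)
    (hbc : y (-1) = 0 ∧ y 1 = 0)
    (hnt : ∃ x ∈ Set.Icc (-1:ℝ) 1, y x ≠ 0) :
    lam.im < 0 ∧ -1 ≤ lam.re ∧ lam.re ≤ 1 := by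
  obtain ⟨hbm, hbp⟩ := hbc
  obtain ⟨x₀, hx₀, hyx₀⟩ := hnt
  have h11 : (-1 : ℝ) < 1 := by norm_num
  have hyc : ContinuousOn y (Icc (-1) 1) :=
    fun x hx => (hy' x hx).continuousAt.continuousWithinAt
  have hy'c : ContinuousOn y' (Icc (-1) 1) :=
    fun x hx => (hy'' x hx).continuousAt.continuousWithinAt
  have hid := couette_energy_identity k lam hy' hy'' hcont heq hbm hbp
  set A := ∫ x in (-1 : ℝ)..1, normSq (y' x)
  set B := ∫ x in (-1 : ℝ)..1, normSq (y x)
  set C := ∫ x in (-1 : ℝ)..1, x * normSq (y x)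
  have hB : 0 < B := by
    refine (integral_nonneg h11.le fun x _ => normSq_nonneg _).lt_of_ne' fun hB0 => hyx₀ ?_
    simpa using eqOn_zero_of_intervalIntegral_eq_zero h11
      (continuous_normSq.comp_continuousOn hyc) (fun _ _ => normSq_nonneg _) hB0 hx₀
  have hA : 0 < A := by
    refine (integral_nonneg h11.le fun x _ => normSq_nonneg _).lt_of_ne' fun hA0 => hyx₀ ?_
    have hy'0 := eqOn_zero_of_intervalIntegral_eq_zero h11
      (continuous_normSq.comp_continuousOn hy'c) (fun _ _ => normSq_nonneg _) hA0
    refine (constant_of_has_deriv_right_zero hyc (fun x hx => ?_) x₀ hx₀).trans hbm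
    have hx := Ico_subset_Icc_self hx
    simpa [normSq_eq_zero.1 (hy'0 hx)] using (hy' x hx).hasDerivWithinAt
  have hC : |C| ≤ B := abs_integral_id_mul_le_integral (continuous_normSq.comp_continuousOn hyc)
    fun _ _ => normSq_nonneg _
  have hre : A + k ^ 2 * (lam.im * B) = 0 := by simpa [← ofReal_pow] using congrArg re hid
  have him : C = lam.re * B := by
    simpa [← ofReal_pow, hk.ne', sub_eq_zero] using congrArg im hid
  rw [him, abs_mul, abs_of_pos hB, mul_le_iff_le_one_left hB, abs_le] at hC
  have hkB : 0 < k ^ 2 * B := by positivity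
  exact ⟨by nlinarith, hC⟩
end

section
/- Fix k > 0 and m ∈ ℤ, m ≥ 1. The equation k·∫_{−1}^{1} √(i(ζ−λ)) dζ = mπi, i.e., (2k/3)e^{iπ/4}[(1−λ)^{3/2} − (−1−λ)^{3/2}] = mπi, has at most one solution λ on the ray {−it : t > 1/√3}. -/
/-!
On the ray `λ = -it` the equation reads `c · F(t) = mπi` with the constant `c ≠ 0` and
`F(t) = (1 + it)^{3/2} - (-1 + it)^{3/2}`, so two solutions have equal `F`. For `t ≥ 0` the
arguments of `±1 + it` are `θ` and `π - θ` with `θ = arctan t`, whence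
`Re F(t) = (1 + t²)^{3/4} (cos (3θ/2) + sin (3θ/2))`. The derivative of this function is a positive
multiple of `(cos (θ/2) - sin (θ/2)) / cos θ > 0`, so `Re F` is injective on `t ≥ 0`.
-/

open Complex Real

lemma Complex.norm_one_add_mul_I (t : ℝ) : ‖1 + t * I‖ = √(1 + t ^ 2) := by
  simpa using norm_add_mul_I 1 t

lemma Complex.norm_neg_one_add_mul_I (t : ℝ) : ‖-1 + t * I‖ = √(1 + t ^ 2) := by
  simpa using norm_add_mul_I (-1) t

lemma Complex.arg_one_add_mul_I (t : ℝ) : arg (1 + t * I) = Real.arctan t := by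
  rw [arg_of_re_nonneg (by simp), norm_one_add_mul_I, Real.arctan_eq_arcsin]
  simp

lemma Complex.arg_neg_one_add_mul_I {t : ℝ} (ht : 0 ≤ t) :
    arg (-1 + t * I) = π - Real.arctan t := by
  rw [arg_of_re_neg_of_im_nonneg (by simp) (by simpa using ht), norm_neg_one_add_mul_I,
    Real.arctan_eq_arcsin]
  simp [neg_div, Real.arcsin_neg]
  ring

noncomputable def bracketRe (t : ℝ) : ℝ :=
  (1 + t ^ 2) ^ (3 / 4 : ℝ) * (Real.cos (3 / 2 * Real.arctan t) + Real.sin (3 / 2 * Real.arctan t))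

lemma re_cpow_three_halves_sub {t : ℝ} (ht : 0 ≤ t) :
    ((1 + t * I) ^ (3 / 2 : ℂ) - (-1 + t * I) ^ (3 / 2 : ℂ)).re = bracketRe t := by
  have h32 : (3 / 2 : ℂ) = ((3 / 2 : ℝ) : ℂ) := by push_cast; rfl
  have hpow : √(1 + t ^ 2) ^ (3 / 2 : ℝ) = (1 + t ^ 2) ^ (3 / 4 : ℝ) := by
    rw [Real.sqrt_eq_rpow, ← Real.rpow_mul (by positivity)]
    norm_num
  have hcos : Real.cos ((π - Real.arctan t) * (3 / 2)) = -Real.sin (3 / 2 * Real.arctan t) := by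
    rw [show (π - Real.arctan t) * (3 / 2) = π / 2 - 3 / 2 * Real.arctan t + π by ring,
      Real.cos_add_pi, Real.cos_pi_div_two_sub]
  rw [h32, sub_re, cpow_ofReal_re, cpow_ofReal_re, norm_one_add_mul_I, norm_neg_one_add_mul_I,
    arg_one_add_mul_I, arg_neg_one_add_mul_I ht, hpow, hcos, bracketRe, mul_comm _ (3 / 2 : ℝ)]
  ring

lemma hasDerivAt_bracketRe (t : ℝ) :
    HasDerivAt bracketRe
      (3 / 2 * (1 + t ^ 2) ^ (-1 / 4 : ℝ) *
        (t * (Real.cos (3 / 2 * Real.arctan t) + Real.sin (3 / 2 * Real.arctan t)) +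
          (Real.cos (3 / 2 * Real.arctan t) - Real.sin (3 / 2 * Real.arctan t)))) t := by
  have hpos : 0 < 1 + t ^ 2 := by positivity
  have hmod : HasDerivAt (fun t : ℝ => (1 + t ^ 2) ^ (3 / 4 : ℝ))
      (2 * t * (3 / 4) * (1 + t ^ 2) ^ (3 / 4 - 1 : ℝ)) t := by
    simpa using ((hasDerivAt_pow 2 t).const_add 1).rpow_const (p := 3 / 4) (Or.inl hpos.ne')
  have harg : HasDerivAt (fun t : ℝ => 3 / 2 * Real.arctan t) (3 / 2 * (1 / (1 + t ^ 2))) t :=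
    (Real.hasDerivAt_arctan t).const_mul _
  refine (hmod.mul (harg.cos.add harg.sin)).congr_deriv ?_
  have hsplit : (1 + t ^ 2) ^ (3 / 4 : ℝ) = (1 + t ^ 2) ^ (-1 / 4 : ℝ) * (1 + t ^ 2) := by
    rw [← Real.rpow_add_one hpos.ne']; norm_num
  rw [hsplit, show (3 / 4 - 1 : ℝ) = -1 / 4 by norm_num, Pi.add_apply]
  field_simp
  ring

lemma cos_add_sin_mul_add_cos_sub_sin_pos (t : ℝ) :
    0 < t * (Real.cos (3 / 2 * Real.arctan t) + Real.sin (3 / 2 * Real.arctan t)) +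
      (Real.cos (3 / 2 * Real.arctan t) - Real.sin (3 / 2 * Real.arctan t)) := by
  set θ := Real.arctan t
  have hθ₁ : -(π / 2) < θ := Real.neg_pi_div_two_lt_arctan t
  have hθ₂ : θ < π / 2 := Real.arctan_lt_pi_div_two t
  have hcos : 0 < Real.cos θ := Real.cos_pos_of_mem_Ioo ⟨hθ₁, hθ₂⟩
  have htan : t * Real.cos θ = Real.sin θ := by
    rw [← Real.tan_arctan t, Real.tan_eq_sin_div_cos, div_mul_cancel₀ _ hcos.ne']
  -- multiplying by `cos θ` turns `t` into `tan θ`, and the bracket into `cos (θ/2) - sin (θ/2)`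
  have key : Real.cos θ * (t * (Real.cos (3 / 2 * θ) + Real.sin (3 / 2 * θ)) +
      (Real.cos (3 / 2 * θ) - Real.sin (3 / 2 * θ))) = Real.cos (θ / 2) - Real.sin (θ / 2) := by
    have hc : Real.cos (θ / 2) = Real.cos (3 / 2 * θ - θ) := by ring_nf
    have hs : Real.sin (θ / 2) = Real.sin (3 / 2 * θ - θ) := by ring_nf
    rw [hc, hs, Real.cos_sub, Real.sin_sub]
    linear_combination (Real.cos (3 / 2 * θ) + Real.sin (3 / 2 * θ)) * htan
  have hhalf : 0 < Real.cos (θ / 2) - Real.sin (θ / 2) := by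
    have h := Real.sin_pos_of_pos_of_lt_pi (x := π / 4 - θ / 2) (by linarith) (by linarith)
    rw [Real.sin_sub, Real.sin_pi_div_four, Real.cos_pi_div_four, ← mul_sub] at h
    exact pos_of_mul_pos_right h (by positivity)
  exact pos_of_mul_pos_right (key ▸ hhalf) hcos.le

lemma strictMono_bracketRe : StrictMono bracketRe :=
  strictMono_of_hasDerivAt_pos hasDerivAt_bracketRe fun t =>
    mul_pos (by positivity) (cos_add_sin_mul_add_cos_sub_sin_pos t)

lemma injOn_re_cpow_three_halves_sub :
    Set.InjOn (fun t : ℝ => ((1 + t * I) ^ (3 / 2 : ℂ) - (-1 + t * I) ^ (3 / 2 : ℂ)).re)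
      (Set.Ici 0) := fun _ hs _ ht h =>
  strictMono_bracketRe.injective <|
    (re_cpow_three_halves_sub hs).symm.trans (h.trans (re_cpow_three_halves_sub ht))

theorem stmt12_general (k : ℝ) (hk : 0 < k) (m : ℤ)
    (t₁ t₂ : ℝ) (ht₁ : 1 / Real.sqrt 3 < t₁) (ht₂ : 1 / Real.sqrt 3 < t₂)
    (h₁ : (2 * (k:ℂ) / 3) * Complex.exp (Real.pi / 4 * Complex.I) *
        (((1 : ℂ) - (-Complex.I * t₁)) ^ ((3 : ℂ)/2) -
         ((-1 : ℂ) - (-Complex.I * t₁)) ^ ((3 : ℂ)/2)) = (m : ℂ) * Real.pi * Complex.I)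
    (h₂ : (2 * (k:ℂ) / 3) * Complex.exp (Real.pi / 4 * Complex.I) *
        (((1 : ℂ) - (-Complex.I * t₂)) ^ ((3 : ℂ)/2) -
         ((-1 : ℂ) - (-Complex.I * t₂)) ^ ((3 : ℂ)/2)) = (m : ℂ) * Real.pi * Complex.I) :
    t₁ = t₂ := by
  have hray : (0 : ℝ) < 1 / √3 := by positivity
  have hc : 2 * (k : ℂ) / 3 * exp (π / 4 * I) ≠ 0 :=
    mul_ne_zero (by simp [hk.ne']) (exp_ne_zero _)
  have hF := mul_left_cancel₀ hc (h₁.trans h₂.symm)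
  have hsub_neg (a : ℂ) (t : ℝ) : a - -I * t = a + t * I := by ring
  simp only [hsub_neg] at hF
  exact injOn_re_cpow_three_halves_sub (hray.trans ht₁).le (hray.trans ht₂).le (congrArg re hF)

/-- For fixed `k > 0` and integer `m ≥ 1`, the quantization equation
`(2k/3)e^{iπ/4}[(1−λ)^{3/2} − (−1−λ)^{3/2}] = mπi` has at most one solution `λ` on the
ray `{−it : t > 1/√3}`. -/
theorem stmt12 (k : ℝ) (hk : 0 < k) (m : ℤ) (hm : 1 ≤ m)
    (t₁ t₂ : ℝ) (ht₁ : 1 / Real.sqrt 3 < t₁) (ht₂ : 1 / Real.sqrt 3 < t₂)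
    (h₁ : (2 * (k:ℂ) / 3) * Complex.exp (Real.pi / 4 * Complex.I) *
        (((1 : ℂ) - (-Complex.I * t₁)) ^ ((3 : ℂ)/2) -
         ((-1 : ℂ) - (-Complex.I * t₁)) ^ ((3 : ℂ)/2)) = (m : ℂ) * Real.pi * Complex.I)
    (h₂ : (2 * (k:ℂ) / 3) * Complex.exp (Real.pi / 4 * Complex.I) *
        (((1 : ℂ) - (-Complex.I * t₂)) ^ ((3 : ℂ)/2) -
         ((-1 : ℂ) - (-Complex.I * t₂)) ^ ((3 : ℂ)/2)) = (m : ℂ) * Real.pi * Complex.I) :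
    t₁ = t₂ :=
  stmt12_general k hk m t₁ t₂ ht₁ ht₂ h₁ h₂
end
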